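/- For every k ∈ ℕ, m > k, and p,q ∈ [0,1], P_{p,q}(C_m(S_m) ∩ Q(S_m)) ≤ (k+1) · P_{p,q}(C_m(S_m⁰)), where S_m = [0,m−1]²×{0,1,…,k}, S_m⁰ = [0,m−1]²×{0}, Q(S_m) is the event that all vertical edges of the box [−m, 2m−1]²×{0,…,k} are closed, and C_m(A) is the event that some vertex of A is connected by a path of open edges to a vertex at maximum-norm distance m from A. -/

import Mathlib

open MeasureTheory Set
open scoped ENNReal

namespace AnisoSlab

/-! ### A concrete construction of countable products of Bernoulli measures

The product Bernoulli measure on `ι → Bool` (each coordinate `i` open with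
probability `P i`, independently) is realized as the pushforward of Lebesgue
measure on `[0,1)`: the binary digits of a uniform sample are i.i.d. fair
coins; regrouping them along a pairing function yields countably many
independent uniform samples, and comparing the `i`-th sample with `P i`
yields the desired independent Bernoulli coordinates. -/

/-- The `n`-th binary digit of `x` (digits after the binary point). -/
noncomputable def binDigit (n : ℕ) (x : ℝ) : Bool :=
  decide (⌊x * 2 ^ (n + 1)⌋ % 2 = 1)

/-- Countably many independent uniform-`[0,1]` samples extracted from a single
uniform sample `x` on `[0,1)`, by regrouping its binary digits. -/
noncomputable def unifSample (i : ℕ) (x : ℝ) : ℝ :=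
  ∑' n : ℕ, if binDigit (Nat.pair i n) x then ((2 : ℝ) ^ (n + 1))⁻¹ else 0

/-- The product Bernoulli measure on `ι → Bool`, coordinate `i` being `true`
with probability `P i`, independently over `i`. -/
noncomputable def bernoulliProduct {ι : Type*} [Encodable ι] (P : ι → ℝ) :
    Measure (ι → Bool) :=
  Measure.map (fun x i => decide (unifSample (Encodable.encode i) x < P i))
    (volume.restrict (Set.Ico (0 : ℝ) 1))

/-! ### The slab `S^k` and anisotropic bond percolation on it -/

/-- Ambient vertices: `ℤ³`; the slab `S^k` uses those with third coordinate in `{0, …, k}`. -/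
abbrev Vtx : Type := ℤ × ℤ × ℤ

/-- The three unit coordinate vectors. -/
def dvec : Fin 3 → Vtx
  | 0 => (1, 0, 0)
  | 1 => (0, 1, 0)
  | 2 => (0, 0, 1)

/-- A bond is indexed by its lower endpoint `v` and a direction `i`; it joins
`v` to `v + dvec i`. Directions `0, 1` give radial (horizontal) bonds, and
direction `2` gives axial (vertical) bonds. -/
abbrev EdgeIdx : Type := Vtx × Fin 3

/-- A percolation configuration: each bond is open (`true`) or closed (`false`). -/
abbrev Config : Type := EdgeIdx → Bool

/-- `v` is a vertex of the slab `S^k`. -/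
def InSlab (k : ℕ) (v : Vtx) : Prop := 0 ≤ v.2.2 ∧ v.2.2 ≤ k

/-- `(v, i)` is a bond of the slab `S^k` (both endpoints lie in the slab). -/
def IsEdge (k : ℕ) (e : EdgeIdx) : Prop := InSlab k e.1 ∧ InSlab k (e.1 + dvec e.2)

/-- The measure `P_{p,q}` on configurations of `S^k`: each radial (horizontal)
bond is open with probability `p` and each axial (vertical) bond is open with
probability `q`, independently. -/
noncomputable def slabMeasure (k : ℕ) (p q : ℝ) : Measure Config :=
  bernoulliProduct (fun e => if e.2 = 2 then q else p)

/-- `x` and `y` are joined by an open bond of `S^k` in the configuration `ω`. -/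
def OpenAdj (k : ℕ) (ω : Config) (x y : Vtx) : Prop :=
  ∃ i : Fin 3,
    (y = x + dvec i ∧ IsEdge k (x, i) ∧ ω (x, i) = true) ∨
    (x = y + dvec i ∧ IsEdge k (y, i) ∧ ω (y, i) = true)

/-- The open cluster of the vertex `x` in the configuration `ω`. -/
def cluster (k : ℕ) (ω : Config) (x : Vtx) : Set Vtx :=
  {y | Relation.ReflTransGen (OpenAdj k ω) x y}

/-- The percolation function `θ(p,q) = P_{p,q}(0 ↔ ∞)`. -/
noncomputable def theta (k : ℕ) (p q : ℝ) : ℝ≥0∞ :=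
  slabMeasure k p q {ω | (cluster k ω 0).Infinite}

/-- `p_k = 1 - (1/2)^{1/(k+1)}`, the horizontal critical value at `q = 1`. -/
noncomputable def pCrit (k : ℕ) : ℝ := 1 - (1 / 2 : ℝ) ^ ((1 : ℝ) / (k + 1))

/-- The critical curve `q_c(p) = sup {q ∈ [0,1] : θ(p,q) = 0}`. -/
noncomputable def qc (k : ℕ) (p : ℝ) : ℝ :=
  sSup {q : ℝ | q ∈ Set.Icc (0 : ℝ) 1 ∧ theta k p q = 0}

/-- The critical curve `p_c(q) = sup {p ∈ [0,1] : θ(p,q) = 0}`. -/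
noncomputable def pc (k : ℕ) (q : ℝ) : ℝ :=
  sSup {p : ℝ | p ∈ Set.Icc (0 : ℝ) 1 ∧ theta k p q = 0}


/-- The sup-norm (maximum-norm) distance on `ℤ³`. -/
def supDist (x y : Vtx) : ℤ := max |x.1 - y.1| (max |x.2.1 - y.2.1| |x.2.2 - y.2.2|)

/-- The event `C_m(A)`: some vertex of `A` is connected by an open path to a
vertex at maximum-norm distance `m` from `A`. -/
def CmEvent (k m : ℕ) (A : Set Vtx) : Set Config :=
  {ω | ∃ x ∈ A, ∃ y ∈ cluster k ω x,
        (∀ a ∈ A, (m : ℤ) ≤ supDist y a) ∧ ∃ a ∈ A, supDist y a = (m : ℤ)}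

/-- The box `S_m = [0, m-1]² × {0,…,k}`. -/
def Sm (k m : ℕ) : Set Vtx :=
  {v | 0 ≤ v.1 ∧ v.1 ≤ (m : ℤ) - 1 ∧ 0 ≤ v.2.1 ∧ v.2.1 ≤ (m : ℤ) - 1 ∧ InSlab k v}

/-- `S_m⁰ = [0, m-1]² × {0}`. -/
def Sm0 (m : ℕ) : Set Vtx :=
  {v | 0 ≤ v.1 ∧ v.1 ≤ (m : ℤ) - 1 ∧ 0 ≤ v.2.1 ∧ v.2.1 ≤ (m : ℤ) - 1 ∧ v.2.2 = 0}

/-- `Q(S_m)`: all vertical bonds of the box `[-m, 2m-1]² × {0,…,k}` are closed. -/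
def Qevent (k m : ℕ) : Set Config :=
  {ω | ∀ v : Vtx, -(m : ℤ) ≤ v.1 → v.1 ≤ 2 * (m : ℤ) - 1 →
        -(m : ℤ) ≤ v.2.1 → v.2.1 ≤ 2 * (m : ℤ) - 1 →
        0 ≤ v.2.2 → v.2.2 ≤ (k : ℤ) - 1 → ω (v, 2) = false}



/-! ### Auxiliary development for the proof -/

lemma measurable_binDigit (n : ℕ) : Measurable (binDigit n) := by
  have h1 : Measurable (fun x : ℝ => ⌊x * 2 ^ (n + 1)⌋) :=
    Int.measurable_floor.comp (measurable_id.mul_const _)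
  exact (measurable_from_top (f := fun z : ℤ => decide (z % 2 = 1))).comp h1

lemma floor_parity_fract (u : ℝ) {e : ℕ} (he : 0 < e) :
    ⌊Int.fract u * 2 ^ e⌋ % 2 = ⌊u * 2 ^ e⌋ % 2 := by
  have hu : u * 2 ^ e = Int.fract u * 2 ^ e + ((⌊u⌋ * 2 ^ e : ℤ) : ℝ) := by
    push_cast
    rw [← Int.self_sub_fract u]
    ring
  rw [hu, Int.floor_add_intCast]
  have h2 : (2 : ℤ) ∣ ⌊u⌋ * 2 ^ e := ((dvd_pow_self 2 he.ne')).mul_left _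
  omega

lemma binDigit_true_iff (d : ℕ) (y : ℝ) : binDigit d y = true ↔ ⌊y * 2 ^ (d + 1)⌋ % 2 = 1 := by
  simp [binDigit]

lemma binDigit_false_iff (d : ℕ) (y : ℝ) : binDigit d y = false ↔ ⌊y * 2 ^ (d + 1)⌋ % 2 = 0 := by
  have := Int.emod_two_eq ⌊y * 2 ^ (d + 1)⌋
  simp only [binDigit, decide_eq_false_iff_not]
  omega

lemma binDigit_congr {m : ℕ} {y y' : ℝ} (h : ⌊y' * 2 ^ (m+1)⌋ = ⌊y * 2 ^ (m+1)⌋) :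
    binDigit m y' = binDigit m y := by
  unfold binDigit; rw [h]

lemma floor_add_fract_eq {u r : ℝ} (h0 : 0 ≤ Int.fract u + r) (h1 : Int.fract u + r < 1) :
    ⌊u + r⌋ = ⌊u⌋ := by
  have hu : u + r = (Int.fract u + r) + ((⌊u⌋ : ℤ) : ℝ) := by
    rw [Int.fract]; ring
  rw [hu, Int.floor_add_intCast, Int.floor_eq_zero_iff.mpr ⟨h0, h1⟩, zero_add]

lemma pow_mul_inv_pow_of_lt {m d : ℕ} (h : m < d) :
    (2 : ℝ) ^ (m + 1) * ((2 : ℝ) ^ (d + 1))⁻¹ = ((2 : ℝ) ^ (d - m))⁻¹ := by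
  have h2 : (2:ℝ) ^ (d+1) = 2 ^ (m+1) * 2 ^ (d-m) := by
    rw [← pow_add]; congr 1; omega
  rw [h2, mul_inv, ← mul_assoc, mul_inv_cancel₀ (by positivity), one_mul]

lemma pow_mul_inv_pow_of_gt {m d : ℕ} (h : d < m) :
    (2 : ℝ) ^ (m + 1) * ((2 : ℝ) ^ (d + 1))⁻¹ = ((2 ^ (m - d) : ℤ) : ℝ) := by
  have h2 : (2:ℝ) ^ (m+1) = 2 ^ (d+1) * 2 ^ (m-d) := by
    rw [← pow_add]; congr 1; omega
  push_cast
  rw [h2, mul_comm ((2:ℝ)^(d+1)), mul_assoc, mul_inv_cancel₀ (by positivity), mul_one]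

/-- Digits above `d` are unchanged when shifting by any integer multiple of `2^{-(d+1)}`
(in particular by `±2^{-(d+1)}`), as long as the index `m` exceeds `d`. -/
lemma binDigit_shift_high {m d : ℕ} (h : d < m) (y : ℝ) (ε : ℤ) :
    binDigit m (y + (ε : ℝ) * ((2:ℝ) ^ (d+1))⁻¹) = binDigit m y := by
  have hexp : (y + (ε:ℝ) * ((2:ℝ)^(d+1))⁻¹) * 2 ^ (m+1)
      = y * 2^(m+1) + ((ε * 2^(m-d) : ℤ) : ℝ) := by
    rw [add_mul, mul_assoc, mul_comm (((2:ℝ)^(d+1))⁻¹), pow_mul_inv_pow_of_gt h]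
    push_cast; ring
  simp only [binDigit, decide_eq_decide]
  rw [hexp, Int.floor_add_intCast]
  have h2 : (2:ℤ) ∣ ε * 2^(m-d) := ((dvd_pow_self 2 (by omega : m - d ≠ 0))).mul_left ε
  omega

lemma fract_mul_low {m d : ℕ} (h : m < d) (y : ℝ) :
    Int.fract (y * 2 ^ (m+1)) * 2 ^ (d-m) = Int.fract (y * 2 ^ (m+1)) * 2 ^ (d-m) := rfl

/-- Digits below `d` are unchanged when adding `2^{-(d+1)}` given digit `d` is `0`. -/
lemma binDigit_add_low {m d : ℕ} (h : m < d) {y : ℝ} (hd : binDigit d y = false) :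
    binDigit m (y + ((2:ℝ) ^ (d+1))⁻¹) = binDigit m y := by
  apply binDigit_congr
  set u := y * 2 ^ (m+1) with hu
  set e := d - m with he
  have hepos : 0 < e := by omega
  have hue : u * 2 ^ e = y * 2 ^ (d+1) := by
    rw [hu, mul_assoc, ← pow_add]
    congr 2
    omega
  have hkey : ⌊Int.fract u * 2 ^ e⌋ % 2 = 0 := by
    rw [floor_parity_fract _ hepos, hue]
    exact (binDigit_false_iff d y).mp hd
  set F := Int.fract u with hF
  have hF0 : 0 ≤ F := Int.fract_nonneg u
  have hF1 : F < 1 := Int.fract_lt_one u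
  have h2e : (0:ℝ) < 2 ^ e := by positivity
  have hfl2 : ⌊F * 2 ^ e⌋ ≤ 2 ^ e - 2 := by
    have hlt : ⌊F * 2 ^ e⌋ < 2 ^ e := by
      have : (⌊F * 2 ^ e⌋ : ℝ) < ((2 ^ e : ℤ) : ℝ) := by
        push_cast
        exact lt_of_le_of_lt (Int.floor_le _) (by nlinarith)
      exact_mod_cast this
    have hpar : (2:ℤ) ∣ 2 ^ e := dvd_pow_self 2 hepos.ne'
    omega
  have hFlt : F * 2 ^ e < 2 ^ e - 1 := by
    have h1 := Int.lt_floor_add_one (F * 2 ^ e)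
    have h2 : (⌊F * 2 ^ e⌋ : ℝ) ≤ ((2 ^ e : ℤ) : ℝ) - 2 := by exact_mod_cast hfl2
    push_cast at h2
    linarith
  have hexp : (y + ((2:ℝ)^(d+1))⁻¹) * 2^(m+1) = u + ((2:ℝ) ^ e)⁻¹ := by
    rw [add_mul, hu, mul_comm (((2:ℝ)^(d+1))⁻¹), pow_mul_inv_pow_of_lt h]
  rw [hexp]
  refine floor_add_fract_eq (by positivity) ?_
  rw [← hF]
  have hinv : ((2:ℝ) ^ e)⁻¹ * 2 ^ e = 1 := inv_mul_cancel₀ (by positivity)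
  nlinarith

/-- Digits below `d` are unchanged when subtracting `2^{-(d+1)}` given digit `d` is `1`. -/
lemma binDigit_sub_low {m d : ℕ} (h : m < d) {y : ℝ} (hd : binDigit d y = true) :
    binDigit m (y - ((2:ℝ) ^ (d+1))⁻¹) = binDigit m y := by
  apply binDigit_congr
  set u := y * 2 ^ (m+1) with hu
  set e := d - m with he
  have hepos : 0 < e := by omega
  have hue : u * 2 ^ e = y * 2 ^ (d+1) := by
    rw [hu, mul_assoc, ← pow_add]
    congr 2
    omega
  have hkey : ⌊Int.fract u * 2 ^ e⌋ % 2 = 1 := by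
    rw [floor_parity_fract _ hepos, hue]
    exact (binDigit_true_iff d y).mp hd
  set F := Int.fract u with hF
  have hF0 : 0 ≤ F := Int.fract_nonneg u
  have hF1 : F < 1 := Int.fract_lt_one u
  have h2e : (0:ℝ) < 2 ^ e := by positivity
  have hge1 : 1 ≤ F * 2 ^ e := by
    have hfl : 1 ≤ ⌊F * 2 ^ e⌋ := by
      have h0 : 0 ≤ ⌊F * 2 ^ e⌋ := Int.floor_nonneg.mpr (by positivity)
      omega
    have := Int.floor_le (F * 2 ^ e)
    have h1 : ((1:ℤ) : ℝ) ≤ (⌊F * 2 ^ e⌋ : ℝ) := by exact_mod_cast hfl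
    push_cast at h1
    linarith
  have hexp : (y - ((2:ℝ)^(d+1))⁻¹) * 2^(m+1) = u + (-((2:ℝ) ^ e)⁻¹) := by
    rw [sub_mul, hu, mul_comm (((2:ℝ)^(d+1))⁻¹), pow_mul_inv_pow_of_lt h]
    ring
  rw [hexp]
  have hinv : ((2:ℝ) ^ e)⁻¹ * 2 ^ e = 1 := inv_mul_cancel₀ (by positivity)
  refine floor_add_fract_eq ?_ ?_
  · rw [← hF]
    nlinarith [inv_pos.mpr h2e]
  · rw [← hF]
    have : (0:ℝ) < ((2:ℝ)^e)⁻¹ := inv_pos.mpr h2e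
    linarith

/-- The digit `d` itself flips when adding `2^{-(d+1)}`. -/
lemma binDigit_add_self {d : ℕ} {y : ℝ} (hd : binDigit d y = false) :
    binDigit d (y + ((2:ℝ) ^ (d+1))⁻¹) = true := by
  have hexp : (y + ((2:ℝ)^(d+1))⁻¹) * 2^(d+1) = y * 2^(d+1) + ((1:ℤ):ℝ) := by
    rw [add_mul, inv_mul_cancel₀ (by positivity)]
    norm_num
  rw [binDigit_true_iff, hexp, Int.floor_add_intCast]
  have := (binDigit_false_iff d y).mp hd
  omega

lemma binDigit_sub_self {d : ℕ} {y : ℝ} (hd : binDigit d y = true) :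
    binDigit d (y - ((2:ℝ) ^ (d+1))⁻¹) = false := by
  have hexp : (y - ((2:ℝ)^(d+1))⁻¹) * 2^(d+1) = y * 2^(d+1) + ((-1:ℤ):ℝ) := by
    rw [sub_mul, inv_mul_cancel₀ (by positivity)]
    push_cast
    ring
  rw [binDigit_false_iff, hexp, Int.floor_add_intCast]
  have := (binDigit_true_iff d y).mp hd
  omega

/-- Range facts for the upward flip. -/
lemma flip_up_mem {d : ℕ} {y : ℝ} (h0 : 0 ≤ y) (h1 : y < 1) (hd : binDigit d y = false) :
    0 ≤ y + ((2:ℝ) ^ (d+1))⁻¹ ∧ y + ((2:ℝ) ^ (d+1))⁻¹ < 1 := by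
  have h2 : (0:ℝ) < 2 ^ (d+1) := by positivity
  constructor
  · have : (0:ℝ) < ((2:ℝ)^(d+1))⁻¹ := by positivity
    linarith
  · have hd0 : ⌊y * 2 ^ (d + 1)⌋ % 2 = 0 := (binDigit_false_iff d y).mp hd
    have hfl : ⌊y * 2 ^ (d+1)⌋ ≤ 2 ^ (d+1) - 2 := by
      have hlt : ⌊y * 2 ^ (d+1)⌋ < 2 ^ (d+1) := by
        have : (⌊y * 2 ^ (d+1)⌋ : ℝ) < ((2 ^ (d+1) : ℤ) : ℝ) := by
          push_cast
          exact lt_of_le_of_lt (Int.floor_le _) (by nlinarith)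
        exact_mod_cast this
      have hpar : (2:ℤ) ∣ 2 ^ (d+1) := dvd_pow_self 2 (Nat.succ_ne_zero d)
      omega
    have h3 : y * 2 ^ (d+1) < 2 ^ (d+1) - 1 := by
      have h4 := Int.lt_floor_add_one (y * 2 ^ (d+1))
      have h5 : (⌊y * 2 ^ (d+1)⌋ : ℝ) ≤ ((2 ^ (d+1) : ℤ) : ℝ) - 2 := by exact_mod_cast hfl
      push_cast at h5
      linarith
    have hinv : ((2:ℝ) ^ (d+1))⁻¹ * 2 ^ (d+1) = 1 := inv_mul_cancel₀ (by positivity)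
    nlinarith [inv_pos.mpr h2]

/-- Range facts for the downward flip. -/
lemma flip_down_mem {d : ℕ} {y : ℝ} (h0 : 0 ≤ y) (h1 : y < 1) (hd : binDigit d y = true) :
    0 ≤ y - ((2:ℝ) ^ (d+1))⁻¹ ∧ y - ((2:ℝ) ^ (d+1))⁻¹ < 1 := by
  have h2 : (0:ℝ) < 2 ^ (d+1) := by positivity
  constructor
  · have hd1 : ⌊y * 2 ^ (d + 1)⌋ % 2 = 1 := (binDigit_true_iff d y).mp hd
    have hfl : 1 ≤ ⌊y * 2 ^ (d+1)⌋ := by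
      have h0' : 0 ≤ ⌊y * 2 ^ (d+1)⌋ := Int.floor_nonneg.mpr (by positivity)
      omega
    have : (1:ℝ) ≤ y * 2 ^ (d+1) := by
      have h1' : ((1:ℤ) : ℝ) ≤ (⌊y * 2 ^ (d+1)⌋ : ℝ) := by exact_mod_cast hfl
      push_cast at h1'
      linarith [Int.floor_le (y * 2 ^ (d+1))]
    have hinv : ((2:ℝ) ^ (d+1))⁻¹ * 2 ^ (d+1) = 1 := inv_mul_cancel₀ (by positivity)
    nlinarith [inv_pos.mpr h2]
  · have : (0:ℝ) < ((2:ℝ)^(d+1))⁻¹ := by positivity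
    linarith

/-- Upward flip preserves all digits other than `d`. -/
lemma binDigit_add_ne {m d : ℕ} (h : m ≠ d) {y : ℝ} (hd : binDigit d y = false) :
    binDigit m (y + ((2:ℝ) ^ (d+1))⁻¹) = binDigit m y := by
  rcases lt_or_gt_of_ne h with hlt | hgt
  · exact binDigit_add_low hlt hd
  · have := binDigit_shift_high hgt y 1
    simpa using this

/-- Downward flip preserves all digits other than `d`. -/
lemma binDigit_sub_ne {m d : ℕ} (h : m ≠ d) {y : ℝ} (hd : binDigit d y = true) :
    binDigit m (y - ((2:ℝ) ^ (d+1))⁻¹) = binDigit m y := by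
  rcases lt_or_gt_of_ne h with hlt | hgt
  · exact binDigit_sub_low hlt hd
  · have := binDigit_shift_high hgt y (-1)
    simp only [Int.cast_neg, Int.cast_one, neg_mul, one_mul] at this
    rw [← this]
    ring_nf

lemma measurableSet_pattern (s : Finset ℕ) (τ : ℕ → ℕ) (b : ℕ → Bool) :
    MeasurableSet {x : ℝ | ∀ n ∈ s, binDigit (τ n) x = b n} := by
  have h : {x : ℝ | ∀ n ∈ s, binDigit (τ n) x = b n}
      = ⋂ n ∈ (s : Set ℕ), (binDigit (τ n)) ⁻¹' {b n} := by
    ext x; simp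
  rw [h]
  exact MeasurableSet.biInter s.countable_toSet
    (fun n _ => measurable_binDigit _ (measurableSet_singleton _))

/-- The measure of a cylinder prescribing finitely many distinct binary digits:
each digit halves the measure, independently of which digits and which values. -/
lemma volume_digit_pattern (s : Finset ℕ) (τ : ℕ → ℕ) (hτ : Set.InjOn τ s) (b : ℕ → Bool) :
    volume.restrict (Set.Ico (0:ℝ) 1) {x | ∀ n ∈ s, binDigit (τ n) x = b n}
      = 2⁻¹ ^ s.card := by
  induction s using Finset.induction_on with
  | empty =>
      have h : {x : ℝ | ∀ n ∈ (∅ : Finset ℕ), binDigit (τ n) x = b n} = Set.univ := by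
        ext x; simp
      simp [h]
  | @insert a s' ha ih =>
      have hτ' : Set.InjOn τ s' := hτ.mono (by intro z hz; exact Finset.mem_insert_of_mem hz)
      have hne : ∀ n ∈ s', τ n ≠ τ a := by
        intro n hn hEq
        have h2 : n = a := hτ (Finset.mem_insert_of_mem hn) (Finset.mem_insert_self a s') hEq
        exact ha (h2 ▸ hn)
      set d := τ a with hd
      set c : ℝ := ((2:ℝ) ^ (d+1))⁻¹ with hc
      set A := {x : ℝ | ∀ n ∈ s', binDigit (τ n) x = b n} with hA
      set Et := (A ∩ {x : ℝ | binDigit d x = true}) ∩ Set.Ico (0:ℝ) 1 with hEt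
      set Ef := (A ∩ {x : ℝ | binDigit d x = false}) ∩ Set.Ico (0:ℝ) 1 with hEf
      have hmemA : ∀ {x y : ℝ}, (∀ m ≠ d, binDigit m y = binDigit m x) → x ∈ A → y ∈ A := by
        intro x y hdig hx n hn
        rw [hdig (τ n) (hne n hn)]
        exact hx n hn
      have key : Ef = (fun x => x + c) ⁻¹' Et := by
        ext x
        constructor
        · rintro ⟨⟨hxA, hxd⟩, hxI⟩
          have hxd' : binDigit d x = false := hxd
          have hmem := flip_up_mem hxI.1 hxI.2 hxd'
          refine ⟨⟨hmemA (fun m hm => binDigit_add_ne hm hxd') hxA,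
            binDigit_add_self hxd'⟩, hmem.1, hmem.2⟩
        · rintro ⟨⟨hyA, hyd⟩, hyI⟩
          have hyd' : binDigit d (x + c) = true := hyd
          have hmem := flip_down_mem hyI.1 hyI.2 hyd'
          have hxc : x + c - c = x := by ring
          rw [hxc] at hmem
          have hdig : ∀ m ≠ d, binDigit m x = binDigit m (x + c) := by
            intro m hm
            have := binDigit_sub_ne hm hyd'
            rwa [hxc] at this
          refine ⟨⟨hmemA hdig hyA, ?_⟩, hmem⟩
          have := binDigit_sub_self hyd'
          rwa [hxc] at this
      have hmA : MeasurableSet A := measurableSet_pattern s' τ b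
      have hmt : MeasurableSet {x : ℝ | binDigit d x = true} :=
        measurable_binDigit d (measurableSet_singleton true)
      have hmf : MeasurableSet {x : ℝ | binDigit d x = false} :=
        measurable_binDigit d (measurableSet_singleton false)
      have hmEt : MeasurableSet Et := (hmA.inter hmt).inter measurableSet_Ico
      have hmEf : MeasurableSet Ef := (hmA.inter hmf).inter measurableSet_Ico
      have hvol : volume Ef = volume Et := by
        rw [key]
        exact measure_preimage_add_right volume c Et
      have hunion : Et ∪ Ef = A ∩ Set.Ico (0:ℝ) 1 := by
        ext x
        constructor
        · rintro (⟨⟨h1, _⟩, h3⟩ | ⟨⟨h1, _⟩, h3⟩) <;> exact ⟨h1, h3⟩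
        · rintro ⟨h1, h3⟩
          rcases Bool.eq_false_or_eq_true (binDigit d x) with hb | hb
          · exact Or.inl ⟨⟨h1, hb⟩, h3⟩
          · exact Or.inr ⟨⟨h1, hb⟩, h3⟩
      have hdisj : Disjoint Et Ef := by
        rw [Set.disjoint_left]
        rintro x ⟨⟨_, h1⟩, _⟩ ⟨⟨_, h2⟩, _⟩
        simp only [Set.mem_setOf_eq] at h1 h2
        rw [h1] at h2
        exact Bool.noConfusion h2
      have hsum : volume Et + volume Ef = 2⁻¹ ^ s'.card := by
        rw [← measure_union hdisj hmEf, hunion, ← ih hτ',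
          Measure.restrict_apply' measurableSet_Ico]
      have hhalf : volume Ef = 2⁻¹ ^ s'.card * 2⁻¹ := by
        rw [← hvol] at hsum
        have h3 : 2 * volume Ef = 2⁻¹ ^ s'.card := by rw [two_mul]; exact hsum
        calc volume Ef = 2⁻¹ * (2 * volume Ef) := by
              rw [← mul_assoc, ENNReal.inv_mul_cancel (by norm_num) (by norm_num), one_mul]
          _ = 2⁻¹ ^ s'.card * 2⁻¹ := by rw [h3, mul_comm]
      have hbig : {x : ℝ | ∀ n ∈ insert a s', binDigit (τ n) x = b n}
          = A ∩ {x : ℝ | binDigit d x = b a} := by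
        ext x
        simp only [Finset.mem_insert, Set.mem_setOf_eq, Set.mem_inter_iff, hA, ← hd]
        constructor
        · intro h
          exact ⟨fun n hn => h n (Or.inr hn), h a (Or.inl rfl)⟩
        · rintro ⟨h1, h2⟩ n hn
          rcases hn with rfl | hn
          · exact h2
          · exact h1 n hn
      rw [Measure.restrict_apply' measurableSet_Ico, hbig, Finset.card_insert_of_notMem ha,
        pow_succ]
      cases hba : b a
      · rw [← hEf]; exact hhalf
      · rw [← hEt, ← hvol]; exact hhalf

/-! ### The fair-coin sequence extracted from a uniform sample -/

lemma measurableSet_boolCylinder (s : Finset ℕ) (b : ℕ → Bool) :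
    MeasurableSet {d : ℕ → Bool | ∀ n ∈ s, d n = b n} := by
  have h : {d : ℕ → Bool | ∀ n ∈ s, d n = b n}
      = ⋂ n ∈ (s : Set ℕ), (fun d : ℕ → Bool => d n) ⁻¹' {b n} := by
    ext d; simp
  rw [h]
  exact MeasurableSet.biInter s.countable_toSet
    (fun n _ => measurable_pi_apply n (measurableSet_singleton _))

lemma isProbabilityMeasure_restrict_Ico01 :
    IsProbabilityMeasure (volume.restrict (Set.Ico (0:ℝ) 1)) := by
  constructor
  rw [Measure.restrict_apply_univ]
  simp [Real.volume_Ico]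

lemma cylinder_singleton_eq (s : Finset ℕ) (b : (i : {x // x ∈ s}) → Bool) :
    cylinder (α := fun _ : ℕ => Bool) s ({b} : Set _)
      = {d : ℕ → Bool | ∀ n ∈ s, d n = if h : n ∈ s then b ⟨n, h⟩ else true} := by
  ext d
  rw [mem_cylinder]
  simp only [Set.mem_singleton_iff, Set.mem_setOf_eq]
  constructor
  · intro h n hn
    rw [dif_pos hn]
    exact congrFun h ⟨n, hn⟩
  · intro h
    funext i
    have := h i.1 i.2
    rwa [dif_pos i.2] at this

/-- The law of the digit sequence read along any injection of the digit
positions, evaluated on a finite-pattern cylinder. -/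
lemma map_binDigit_pattern (τ : ℕ → ℕ) (hτ : Function.Injective τ)
    (s : Finset ℕ) (b : ℕ → Bool) :
    Measure.map (fun x n => binDigit (τ n) x) (volume.restrict (Set.Ico (0:ℝ) 1))
      {d : ℕ → Bool | ∀ n ∈ s, d n = b n} = 2⁻¹ ^ s.card := by
  have hmτ : Measurable (fun x (n : ℕ) => binDigit (τ n) x) :=
    measurable_pi_lambda _ (fun n => measurable_binDigit (τ n))
  rw [Measure.map_apply hmτ (measurableSet_boolCylinder s b)]
  exact volume_digit_pattern s τ hτ.injOn b

/-- The law of the digit sequence read along any injection into the digit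
positions is the fair-coin law: it does not depend on the injection. -/
lemma map_binDigit_eq (τ : ℕ → ℕ) (hτ : Function.Injective τ) :
    Measure.map (fun x n => binDigit (τ n) x) (volume.restrict (Set.Ico (0:ℝ) 1))
      = Measure.map (fun x n => binDigit n x) (volume.restrict (Set.Ico (0:ℝ) 1)) := by
  have hmτ : Measurable (fun x (n : ℕ) => binDigit (τ n) x) :=
    measurable_pi_lambda _ (fun n => measurable_binDigit (τ n))
  have hmid : Measurable (fun x (n : ℕ) => binDigit n x) :=
    measurable_pi_lambda _ (fun n => measurable_binDigit n)
  haveI := isProbabilityMeasure_restrict_Ico01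
  haveI : IsProbabilityMeasure
      (Measure.map (fun x n => binDigit (τ n) x) (volume.restrict (Set.Ico (0:ℝ) 1))) :=
    Measure.isProbabilityMeasure_map hmτ.aemeasurable
  refine ext_of_generate_finite (measurableCylinders (fun _ : ℕ => Bool))
    generateFrom_measurableCylinders.symm isPiSystem_measurableCylinders ?_ ?_
  · intro A hA
    obtain ⟨s, S, _, rfl⟩ := (mem_measurableCylinders A).mp hA
    set cyl1 : ((i : {x // x ∈ s}) → Bool) → Set (ℕ → Bool) :=
      fun b => cylinder (α := fun _ : ℕ => Bool) s ({b} : Set _) with hcyl1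
    have hdecomp : cylinder s S = ⋃ b ∈ S, cyl1 b := by
      ext d
      rw [mem_cylinder]
      simp only [Set.mem_iUnion, hcyl1, mem_cylinder, Set.mem_singleton_iff]
      exact ⟨fun h => ⟨_, h, rfl⟩, fun ⟨c, hc, hdc⟩ => hdc ▸ hc⟩
    have hcnt : S.Countable := S.to_countable
    have hdisj : S.PairwiseDisjoint cyl1 := by
      intro b1 h1 b2 h2 hne
      refine Set.disjoint_left.mpr (fun d hd1 hd2 => hne ?_)
      simp only [hcyl1, mem_cylinder, Set.mem_singleton_iff] at hd1 hd2
      rw [← hd1, ← hd2]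
    have hmeas : ∀ b ∈ S, MeasurableSet (cyl1 b) := by
      intro b _
      simp only [hcyl1, cylinder_singleton_eq]
      exact measurableSet_boolCylinder s _
    rw [hdecomp, measure_biUnion hcnt hdisj hmeas, measure_biUnion hcnt hdisj hmeas]
    congr 1
    funext b
    simp only [hcyl1, cylinder_singleton_eq]
    rw [map_binDigit_pattern τ hτ]
    have h2 := map_binDigit_pattern id Function.injective_id s
      (fun n => if h : n ∈ s then b.1 ⟨n, h⟩ else true)
    simp only [id_eq] at h2
    rw [h2]
  · rw [Measure.map_apply hmτ MeasurableSet.univ, Measure.map_apply hmid MeasurableSet.univ]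
    simp

/-! ### Invariance of the Bernoulli product under probability-preserving permutations -/

/-- The geometric-series read-out map turning a Boolean sequence into a real
number in `[0,1]`. -/
noncomputable def readOut (d : ℕ → Bool) : ℝ :=
  ∑' n : ℕ, if d n then ((2 : ℝ) ^ (n + 1))⁻¹ else 0

lemma summable_readOut (d : ℕ → Bool) :
    Summable (fun n => if d n then ((2 : ℝ) ^ (n + 1))⁻¹ else 0) := by
  refine Summable.of_nonneg_of_le (fun n => ?_) (fun n => ?_)
    (((summable_geometric_of_lt_one (r := 2⁻¹) (by norm_num) (by norm_num)).mul_left 2⁻¹))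
  · by_cases h : d n
    · simp only [h, if_true]
      positivity
    · simp [h]
  · have hb : ((2:ℝ) ^ (n+1))⁻¹ = 2⁻¹ * 2⁻¹ ^ n := by
      rw [← inv_pow, pow_succ']
    by_cases h : d n
    · simp only [h, if_true]
      exact le_of_eq hb
    · simp only [h, if_false]
      positivity

lemma measurable_readOut : Measurable readOut := by
  have hfin : ∀ K : ℕ, Measurable (fun d : ℕ → Bool =>
      ∑ n ∈ Finset.range K, if d n then ((2 : ℝ) ^ (n + 1))⁻¹ else 0) := by
    intro K
    refine Finset.measurable_sum _ (fun n _ => ?_)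
    exact (measurable_from_top (f := fun b : Bool => if b then ((2:ℝ)^(n+1))⁻¹ else 0)).comp
      (measurable_pi_apply n)
  refine measurable_of_tendsto_metrizable hfin ?_
  rw [tendsto_pi_nhds]
  intro d
  exact ((summable_readOut d).hasSum).tendsto_sum_nat

lemma measurable_decide_lt (c : ℝ) : Measurable (fun r : ℝ => decide (r < c)) := by
  have h : (fun r : ℝ => decide (r < c)) = fun r => if r < c then true else false := by
    funext r
    by_cases hr : r < c <;> simp [hr]
  rw [h]
  exact Measurable.ite measurableSet_Iio measurable_const measurable_const

open Classical in
/-- Re-encoding map on digit positions induced by a permutation of the index type. -/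
noncomputable def reEnc {ι : Type*} [Encodable ι] (σ : ι ≃ ι) (a : ℕ) : ℕ :=
  if h : ∃ i : ι, Encodable.encode i = a then Encodable.encode (σ h.choose) else a

lemma reEnc_encode {ι : Type*} [Encodable ι] (σ : ι ≃ ι) (i : ι) :
    reEnc σ (Encodable.encode i) = Encodable.encode (σ i) := by
  classical
  have h : ∃ j : ι, Encodable.encode j = Encodable.encode i := ⟨i, rfl⟩
  rw [reEnc, dif_pos h]
  congr 1
  exact congrArg σ (Encodable.encode_injective h.choose_spec)

lemma reEnc_injective {ι : Type*} [Encodable ι] (σ : ι ≃ ι) :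
    Function.Injective (reEnc σ) := by
  classical
  intro a b hab
  by_cases ha : ∃ i : ι, Encodable.encode i = a
    <;> by_cases hb : ∃ i : ι, Encodable.encode i = b
  · rw [reEnc, dif_pos ha, reEnc, dif_pos hb] at hab
    have h2 : σ ha.choose = σ hb.choose := Encodable.encode_injective hab
    have h3 : ha.choose = hb.choose := σ.injective h2
    rw [← ha.choose_spec, ← hb.choose_spec, h3]
  · rw [reEnc, dif_pos ha, reEnc, dif_neg hb] at hab
    exact absurd ⟨σ ha.choose, hab⟩ hb
  · rw [reEnc, dif_neg ha, reEnc, dif_pos hb] at hab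
    exact absurd ⟨σ hb.choose, hab.symm⟩ ha
  · rwa [reEnc, dif_neg ha, reEnc, dif_neg hb] at hab

/-- Re-indexing map on digit positions: permute the first component of the pairing. -/
noncomputable def rePair {ι : Type*} [Encodable ι] (σ : ι ≃ ι) (m : ℕ) : ℕ :=
  Nat.pair (reEnc σ m.unpair.1) m.unpair.2

lemma rePair_injective {ι : Type*} [Encodable ι] (σ : ι ≃ ι) :
    Function.Injective (rePair σ) := by
  intro a b hab
  rw [rePair, rePair, Nat.pair_eq_pair] at hab
  have h1 : a.unpair.1 = b.unpair.1 := reEnc_injective σ hab.1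
  have h2 := hab.2
  rw [← Nat.pair_unpair a, ← Nat.pair_unpair b, h1, h2]

lemma rePair_pair {ι : Type*} [Encodable ι] (σ : ι ≃ ι) (i : ι) (n : ℕ) :
    rePair σ (Nat.pair (Encodable.encode i) n) = Nat.pair (Encodable.encode (σ i)) n := by
  rw [rePair, Nat.unpair_pair, reEnc_encode]

/-- The product Bernoulli measure is invariant under permutations of the
coordinates that preserve the success probabilities. -/
lemma bernoulliProduct_map_comp_equiv {ι : Type*} [Encodable ι] (P : ι → ℝ) (σ : ι ≃ ι)
    (hP : ∀ i, P (σ i) = P i) :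
    Measure.map (fun ω : ι → Bool => fun i => ω (σ i)) (bernoulliProduct P)
      = bernoulliProduct P := by
  classical
  set ν := volume.restrict (Set.Ico (0:ℝ) 1) with hν
  set F : (ℕ → Bool) → (ι → Bool) :=
    fun d i => decide (readOut (fun n => d (Nat.pair (Encodable.encode i) n)) < P i) with hF
  have hmF : Measurable F := by
    refine measurable_pi_lambda _ (fun i => ?_)
    exact (measurable_decide_lt (P i)).comp
      (measurable_readOut.comp (measurable_pi_lambda _
        (fun n => measurable_pi_apply (Nat.pair (Encodable.encode i) n))))
  set Did : ℝ → (ℕ → Bool) := fun x n => binDigit n x with hDid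
  set Dτ : ℝ → (ℕ → Bool) := fun x n => binDigit (rePair σ n) x with hDτ
  have hmDid : Measurable Did := measurable_pi_lambda _ (fun n => measurable_binDigit n)
  have hmDτ : Measurable Dτ := measurable_pi_lambda _ (fun n => measurable_binDigit _)
  have hG : (fun x i => decide (unifSample (Encodable.encode i) x < P i)) = F ∘ Did := by
    funext x i
    rfl
  have hmG : Measurable (fun x i => decide (unifSample (Encodable.encode i) x < P i)) := by
    rw [hG]; exact hmF.comp hmDid
  have hmσ : Measurable (fun ω : ι → Bool => fun i => ω (σ i)) :=
    measurable_pi_lambda _ (fun i => measurable_pi_apply (σ i))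
  rw [bernoulliProduct, ← hν, Measure.map_map hmσ hmG]
  have hcomp : ((fun ω : ι → Bool => fun i => ω (σ i))
      ∘ (fun x i => decide (unifSample (Encodable.encode i) x < P i))) = F ∘ Dτ := by
    funext x i
    show decide (unifSample (Encodable.encode (σ i)) x < P (σ i))
      = decide (readOut (fun n => binDigit (rePair σ (Nat.pair (Encodable.encode i) n)) x) < P i)
    have h1 : (fun n => binDigit (rePair σ (Nat.pair (Encodable.encode i) n)) x)
        = fun n => binDigit (Nat.pair (Encodable.encode (σ i)) n) x := by
      funext n
      rw [rePair_pair]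
    rw [h1, hP i]
    rfl
  rw [hcomp, hG, ← Measure.map_map hmF hmDτ, ← Measure.map_map hmF hmDid]
  congr 1
  rw [hDτ, hDid]
  exact map_binDigit_eq (rePair σ) (rePair_injective σ)

/-! ### Paths, measurability of connection events -/

lemma reflTransGen_iff_exists_chain {α : Type*} {r : α → α → Prop} {x y : α} :
    Relation.ReflTransGen r x y ↔
      ∃ (n : ℕ) (f : ℕ → α), f 0 = x ∧ f n = y ∧ ∀ s, s < n → r (f s) (f (s+1)) := by
  constructor
  · intro h
    induction h with
    | refl => exact ⟨0, fun _ => x, rfl, rfl, by omega⟩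
    | @tail b c hxb hbc ih =>
        obtain ⟨n, f, h0, hn, hs⟩ := ih
        refine ⟨n + 1, fun s => if s ≤ n then f s else c, ?_, ?_, ?_⟩
        · simp only [if_pos (Nat.zero_le n)]; exact h0
        · simp only [if_neg (by omega : ¬ n + 1 ≤ n)]
        · intro s hslt
          by_cases hcs : s < n
          · simp only [if_pos (by omega : s ≤ n), if_pos (by omega : s + 1 ≤ n)]
            exact hs s hcs
          · have hsn : s = n := by omega
            subst hsn
            simp only [if_pos (le_refl s), if_neg (by omega : ¬ s + 1 ≤ s), hn]
            exact hbc
  · rintro ⟨n, f, h0, hn, hs⟩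
    have key : ∀ s, s ≤ n → Relation.ReflTransGen r x (f s) := by
      intro s
      induction s with
      | zero => intro _; rw [h0]
      | succ s ih =>
          intro hsn
          exact (ih (by omega)).tail (hs s (by omega))
    rw [← hn]
    exact key n le_rfl

lemma measurableSet_prop_and (p : Prop) {S : Set Config} (hS : MeasurableSet S) :
    MeasurableSet {ω : Config | p ∧ ω ∈ S} := by
  by_cases hp : p
  · have h : {ω : Config | p ∧ ω ∈ S} = S := by ext ω; simp [hp]
    rw [h]; exact hS
  · have h : {ω : Config | p ∧ ω ∈ S} = ∅ := by ext ω; simp [hp]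
    rw [h]; exact MeasurableSet.empty

lemma measurableSet_coord (e : EdgeIdx) :
    MeasurableSet {ω : Config | ω e = true} := by
  have h : {ω : Config | ω e = true} = (fun ω : Config => ω e) ⁻¹' {true} := rfl
  rw [h]
  exact measurable_pi_apply e (measurableSet_singleton true)

lemma measurableSet_openAdj (k : ℕ) (a b : Vtx) :
    MeasurableSet {ω : Config | OpenAdj k ω a b} := by
  have h : {ω : Config | OpenAdj k ω a b} =
      ⋃ i : Fin 3,
        ({ω : Config | (b = a + dvec i ∧ IsEdge k (a, i)) ∧ ω ∈ {ω : Config | ω (a, i) = true}}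
        ∪ {ω : Config | (a = b + dvec i ∧ IsEdge k (b, i)) ∧ ω ∈ {ω : Config | ω (b, i) = true}}) := by
    ext ω
    simp only [OpenAdj, Set.mem_setOf_eq, Set.mem_iUnion, Set.mem_union]
    constructor
    · rintro ⟨i, ⟨h1, h2, h3⟩ | ⟨h1, h2, h3⟩⟩
      · exact ⟨i, Or.inl ⟨⟨h1, h2⟩, h3⟩⟩
      · exact ⟨i, Or.inr ⟨⟨h1, h2⟩, h3⟩⟩
    · rintro ⟨i, ⟨⟨h1, h2⟩, h3⟩ | ⟨⟨h1, h2⟩, h3⟩⟩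
      · exact ⟨i, Or.inl ⟨h1, h2, h3⟩⟩
      · exact ⟨i, Or.inr ⟨h1, h2, h3⟩⟩
  rw [h]
  exact MeasurableSet.iUnion fun i =>
    (measurableSet_prop_and _ (measurableSet_coord _)).union
      (measurableSet_prop_and _ (measurableSet_coord _))

lemma measurableSet_mem_cluster (k : ℕ) (x y : Vtx) :
    MeasurableSet {ω : Config | y ∈ cluster k ω x} := by
  have h : {ω : Config | y ∈ cluster k ω x} =
      ⋃ (n : ℕ), ⋃ (f : Fin (n+1) → Vtx),
        {ω : Config | (f 0 = x ∧ f (Fin.last n) = y) ∧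
          ω ∈ ⋂ s : Fin n, {ω : Config | OpenAdj k ω (f s.castSucc) (f s.succ)}} := by
    ext ω
    simp only [cluster, Set.mem_setOf_eq, Set.mem_iUnion, Set.mem_iInter]
    rw [reflTransGen_iff_exists_chain]
    constructor
    · rintro ⟨n, f, h0, hn, hs⟩
      refine ⟨n, fun s => f s, ⟨by simp [h0], by simp [hn]⟩, fun s => ?_⟩
      have h1 := hs s.1 s.2
      simpa using h1
    · rintro ⟨n, f, ⟨h0, hl⟩, hs⟩
      refine ⟨n, fun s => if h : s < n + 1 then f ⟨s, h⟩ else y, ?_, ?_, ?_⟩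
      · simp only [dif_pos (by omega : 0 < n + 1)]
        rwa [show (⟨0, by omega⟩ : Fin (n+1)) = 0 from rfl]
      · simp only [dif_pos (by omega : n < n + 1)]
        rwa [show (⟨n, by omega⟩ : Fin (n+1)) = Fin.last n from rfl]
      · intro s hslt
        simp only [dif_pos (by omega : s < n + 1), dif_pos (by omega : s + 1 < n + 1)]
        have h1 := hs ⟨s, hslt⟩
        have h2 : (⟨s, hslt⟩ : Fin n).castSucc = ⟨s, by omega⟩ := rfl
        have h3 : (⟨s, hslt⟩ : Fin n).succ = ⟨s + 1, by omega⟩ := rfl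
        rwa [h2, h3] at h1
  rw [h]
  exact MeasurableSet.iUnion fun n => MeasurableSet.iUnion fun f =>
    measurableSet_prop_and _ (MeasurableSet.iInter fun s => measurableSet_openAdj k _ _)

lemma measurableSet_CmEvent (k m : ℕ) (A : Set Vtx) :
    MeasurableSet (CmEvent k m A) := by
  have h : CmEvent k m A =
      ⋃ (x : Vtx), ⋃ (y : Vtx),
        {ω : Config | (x ∈ A ∧ ((∀ a ∈ A, (m:ℤ) ≤ supDist y a) ∧ ∃ a ∈ A, supDist y a = (m:ℤ)))
          ∧ ω ∈ {ω : Config | y ∈ cluster k ω x}} := by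
    ext ω
    simp only [CmEvent, Set.mem_setOf_eq, Set.mem_iUnion]
    constructor
    · rintro ⟨x, hx, y, hy, h1, h2⟩
      exact ⟨x, y, ⟨hx, h1, h2⟩, hy⟩
    · rintro ⟨x, y, ⟨hx, h1, h2⟩, hy⟩
      exact ⟨x, hx, y, hy, h1, h2⟩
  rw [h]
  exact MeasurableSet.iUnion fun x => MeasurableSet.iUnion fun y =>
    measurableSet_prop_and _ (measurableSet_mem_cluster k x y)

/-! ### The layer swap -/

/-- Swap the planes `z = 0` and `z = j` of `ℤ³`. -/
def swapVtx (j : ℤ) (v : Vtx) : Vtx :=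
  if v.2.2 = 0 then (v.1, v.2.1, j) else if v.2.2 = j then (v.1, v.2.1, 0) else v

/-- Swap the horizontal bonds of the planes `z = 0` and `z = j`, leaving all
vertical bonds in place. -/
def swapEdge (j : ℤ) (e : EdgeIdx) : EdgeIdx :=
  if e.2 = 2 then e else (swapVtx j e.1, e.2)

lemma swapVtx_involutive (j : ℤ) : Function.Involutive (swapVtx j) := by
  rintro ⟨a, b, c⟩
  by_cases h0 : c = 0
  · subst h0
    by_cases hj : j = 0
    · subst hj; simp [swapVtx]
    · simp [swapVtx, hj]
  · by_cases hj : c = j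
    · subst hj
      simp [swapVtx, h0]
    · simp [swapVtx, h0, hj]

lemma swapEdge_involutive (j : ℤ) : Function.Involutive (swapEdge j) := by
  rintro ⟨v, i⟩
  by_cases hi : i = 2
  · simp [swapEdge, hi]
  · simp [swapEdge, hi, swapVtx_involutive j v]

/-- The layer swap as a permutation of bonds. -/
noncomputable def layerSwap (j : ℤ) : EdgeIdx ≃ EdgeIdx :=
  (swapEdge_involutive j).toPerm

lemma layerSwap_apply (j : ℤ) (e : EdgeIdx) : layerSwap j e = swapEdge j e := rfl

lemma layerSwap_snd (j : ℤ) (e : EdgeIdx) : (layerSwap j e).2 = e.2 := by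
  rcases e with ⟨v, i⟩
  by_cases hi : i = 2 <;> simp [layerSwap_apply, swapEdge, hi]

/-- The anisotropic product measure is invariant under any layer swap. -/
lemma slabMeasure_map_layerSwap (k : ℕ) (p q : ℝ) (j : ℤ) :
    Measure.map (fun ω : Config => fun e => ω (layerSwap j e)) (slabMeasure k p q)
      = slabMeasure k p q := by
  rw [slabMeasure]
  refine bernoulliProduct_map_comp_equiv _ (layerSwap j) (fun e => ?_)
  rw [layerSwap_snd]

/-! ### Geometry of the slab -/

lemma vtx_ext {v w : Vtx} (h1 : v.1 = w.1) (h2 : v.2.1 = w.2.1) (h3 : v.2.2 = w.2.2) :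
    v = w := by
  rcases v with ⟨a, b, c⟩
  rcases w with ⟨a', b', c'⟩
  simp_all

lemma dvec_comp {i : Fin 3} (hi : i ≠ 2) :
    (dvec i).2.2 = 0 ∧ |(dvec i).1| ≤ 1 ∧ |(dvec i).2.1| ≤ 1 := by
  fin_cases i
  · refine ⟨rfl, ?_, ?_⟩ <;> norm_num [dvec]
  · refine ⟨rfl, ?_, ?_⟩ <;> norm_num [dvec]
  · exact absurd rfl hi

lemma dvec_two : dvec 2 = ((0 : ℤ), (0 : ℤ), (1 : ℤ)) := rfl

lemma add_comp (v w : Vtx) :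
    (v + w).1 = v.1 + w.1 ∧ (v + w).2.1 = v.2.1 + w.2.1 ∧ (v + w).2.2 = v.2.2 + w.2.2 :=
  ⟨rfl, rfl, rfl⟩

/-- The key geometric step: on the event `Q(S_m)`, a crossing of `S_m` stays in
a single layer `z = j` up to its first exit, and swapping that layer with the
bottom one produces a crossing of `S_m⁰`. -/
lemma exists_layer_crossing (k m : ℕ) (hm : k < m) (ω : Config)
    (hC : ω ∈ CmEvent k m (Sm k m)) (hQ : ω ∈ Qevent k m) :
    ∃ j : ℕ, j ≤ k ∧ (fun e => ω (layerSwap (j : ℤ) e)) ∈ CmEvent k m (Sm0 m) := by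
  classical
  obtain ⟨x, hx, y, hy, hfar, -⟩ := hC
  obtain ⟨n, f, h0, hn, hstep⟩ := reflTransGen_iff_exists_chain.mp hy
  have hm1 : (1:ℤ) ≤ (m:ℤ) := by exact_mod_cast Nat.one_le_iff_ne_zero.mpr (by omega)
  have hkm : (k:ℤ) < (m:ℤ) := by exact_mod_cast hm
  -- first exit time
  have hex : ∃ s : ℕ, ∀ a ∈ Sm k m, (m:ℤ) ≤ supDist (f s) a := by
    refine ⟨n, ?_⟩
    rw [hn]; exact hfar
  set t := Nat.find hex with ht
  have htspec : ∀ a ∈ Sm k m, (m:ℤ) ≤ supDist (f t) a := Nat.find_spec hex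
  have htn : t ≤ n := Nat.find_le (by rw [hn]; exact hfar)
  have ht0 : 0 < t := by
    rcases Nat.eq_zero_or_pos t with hz | hpos
    · exfalso
      have h1 := htspec x hx
      rw [hz, h0] at h1
      have h2 : supDist x x = 0 := by simp [supDist]
      omega
    · exact hpos
  have hnear : ∀ s, s < t → ∃ a ∈ Sm k m, supDist (f s) a < (m:ℤ) := by
    intro s hs
    have h1 := Nat.find_min hex hs
    push_neg at h1
    exact h1
  -- horizontal coordinate bounds before the exit
  have hbound : ∀ s, s < t →
      -((m:ℤ) - 1) ≤ (f s).1 ∧ (f s).1 ≤ 2*(m:ℤ) - 2 ∧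
      -((m:ℤ) - 1) ≤ (f s).2.1 ∧ (f s).2.1 ≤ 2*(m:ℤ) - 2 := by
    intro s hs
    obtain ⟨a, ha, hda⟩ := hnear s hs
    obtain ⟨ha1, ha2, ha3, ha4, -⟩ := ha
    have h1 : |(f s).1 - a.1| < (m:ℤ) := lt_of_le_of_lt (le_max_left _ _) hda
    have h2 : |(f s).2.1 - a.2.1| < (m:ℤ) :=
      lt_of_le_of_lt (le_trans (le_max_left _ _) (le_max_right _ _)) hda
    rw [abs_lt] at h1 h2
    omega
  -- slab membership along the path
  have hslab : ∀ s, s ≤ n → InSlab k (f s) := by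
    intro s
    induction s with
    | zero => intro _; rw [h0]; exact hx.2.2.2.2
    | succ s ih =>
        intro hs
        obtain ⟨i, hcase⟩ := hstep s (by omega)
        rcases hcase with ⟨heq, hedge, -⟩ | ⟨heq, hedge, -⟩
        · rw [heq]; exact hedge.2
        · exact hedge.1
  -- all steps before the exit are horizontal
  have hzstep : ∀ s, s < t → ∃ i : Fin 3, i ≠ 2 ∧
      ((f (s+1) = f s + dvec i ∧ IsEdge k (f s, i) ∧ ω (f s, i) = true) ∨
       (f s = f (s+1) + dvec i ∧ IsEdge k (f (s+1), i) ∧ ω (f (s+1), i) = true)) := by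
    intro s hs
    obtain ⟨i, hcase⟩ := hstep s (by omega)
    refine ⟨i, ?_, hcase⟩
    intro hi
    subst hi
    obtain ⟨hb1, hb2, hb3, hb4⟩ := hbound s hs
    rcases hcase with ⟨heq, hedge, hopen⟩ | ⟨heq, hedge, hopen⟩
    · -- vertical bond with lower endpoint f s
      have hz1 : (0:ℤ) ≤ (f s).2.2 := hedge.1.1
      have hz2 : (f s + dvec 2).2.2 = (f s).2.2 + 1 := by
        rw [(add_comp _ _).2.2, dvec_two]
      have hz3 : (f s).2.2 + 1 ≤ (k:ℤ) := by
        have := hedge.2.2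
        rwa [hz2] at this
      have hfalse := hQ (f s) (by omega) (by omega) (by omega) (by omega) hz1 (by omega)
      rw [hfalse] at hopen
      exact Bool.noConfusion hopen
    · -- vertical bond with lower endpoint f (s+1)
      have hxy1 : (f s).1 = (f (s+1)).1 := by
        rw [heq, (add_comp _ _).1, dvec_two]; ring
      have hxy2 : (f s).2.1 = (f (s+1)).2.1 := by
        rw [heq, (add_comp _ _).2.1, dvec_two]; ring
      have hz1 : (0:ℤ) ≤ (f (s+1)).2.2 := hedge.1.1
      have hz2 : (f (s+1) + dvec 2).2.2 = (f (s+1)).2.2 + 1 := by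
        rw [(add_comp _ _).2.2, dvec_two]
      have hz3 : (f (s+1)).2.2 + 1 ≤ (k:ℤ) := by
        have := hedge.2.2
        rwa [hz2] at this
      have hfalse := hQ (f (s+1)) (by omega) (by omega) (by omega) (by omega) hz1 (by omega)
      rw [hfalse] at hopen
      exact Bool.noConfusion hopen
  -- the z-coordinate is constant up to the exit
  have hzconst : ∀ s, s ≤ t → (f s).2.2 = x.2.2 := by
    intro s
    induction s with
    | zero => intro _; rw [h0]
    | succ s ih =>
        intro hs
        obtain ⟨i, hi2, hcase⟩ := hzstep s (by omega)
        have hd := (dvec_comp hi2).1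
        have hprev := ih (by omega)
        rcases hcase with ⟨heq, -, -⟩ | ⟨heq, -, -⟩
        · rw [heq, (add_comp _ _).2.2, hd, add_zero, hprev]
        · have := congrArg (fun v : Vtx => v.2.2) heq
          rw [(add_comp _ _).2.2, hd, add_zero] at this
          rw [← this, hprev]
  -- the layer index
  obtain ⟨hxz0, hxzk⟩ : (0:ℤ) ≤ x.2.2 ∧ x.2.2 ≤ (k:ℤ) := hx.2.2.2.2
  refine ⟨x.2.2.toNat, by omega, ?_⟩
  have hjz : ((x.2.2.toNat : ℤ)) = x.2.2 := Int.toNat_of_nonneg hxz0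
  set ω' : Config := fun e => ω (layerSwap ((x.2.2.toNat : ℤ)) e) with hω'
  -- the projected path
  set g : ℕ → Vtx := fun s => ((f s).1, (f s).2.1, (0:ℤ)) with hg
  have hgstep : ∀ s, s < t → OpenAdj k ω' (g s) (g (s+1)) := by
    intro s hs
    obtain ⟨i, hi2, hcase⟩ := hzstep s hs
    obtain ⟨hdz, -, -⟩ := dvec_comp hi2
    have hz_s : (f s).2.2 = x.2.2 := hzconst s (by omega)
    have hz_s1 : (f (s+1)).2.2 = x.2.2 := hzconst (s+1) (by omega)
    have hswap : ∀ s', (f s').2.2 = x.2.2 →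
        layerSwap ((x.2.2.toNat : ℤ)) (g s', i) = (f s', i) := by
      intro s' hzs
      rw [layerSwap_apply, swapEdge, if_neg (by simpa using hi2)]
      have h1 : swapVtx ((x.2.2.toNat : ℤ)) (g s') = f s' := by
        rw [swapVtx, if_pos rfl]
        exact vtx_ext rfl rfl (by rw [hjz, ← hzs])
      rw [h1]
    have hk0 : (0:ℤ) ≤ (k:ℤ) := by exact_mod_cast Nat.zero_le k
    have hgedge : ∀ s', IsEdge k (g s', i) := by
      intro s'
      have h2 : ((0:ℤ) ≤ (0:ℤ) + (dvec i).2.2) ∧ ((0:ℤ) + (dvec i).2.2 ≤ (k:ℤ)) := by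
        rw [hdz, add_zero]
        exact ⟨le_refl 0, hk0⟩
      exact ⟨⟨le_refl 0, hk0⟩, h2⟩
    rcases hcase with ⟨heq, hedge, hopen⟩ | ⟨heq, hedge, hopen⟩
    · refine ⟨i, Or.inl ⟨?_, hgedge s, ?_⟩⟩
      · refine vtx_ext ?_ ?_ ?_
        · rw [(add_comp _ _).1]
          show (f (s+1)).1 = (f s).1 + (dvec i).1
          rw [heq, (add_comp _ _).1]
        · rw [(add_comp _ _).2.1]
          show (f (s+1)).2.1 = (f s).2.1 + (dvec i).2.1
          rw [heq, (add_comp _ _).2.1]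
        · rw [(add_comp _ _).2.2, hdz]
          show (0:ℤ) = (0:ℤ) + 0
          norm_num
      · rw [hω']
        show ω (layerSwap ((x.2.2.toNat : ℤ)) (g s, i)) = true
        rw [hswap s hz_s]
        exact hopen
    · refine ⟨i, Or.inr ⟨?_, hgedge (s+1), ?_⟩⟩
      · refine vtx_ext ?_ ?_ ?_
        · rw [(add_comp _ _).1]
          show (f s).1 = (f (s+1)).1 + (dvec i).1
          rw [heq, (add_comp _ _).1]
        · rw [(add_comp _ _).2.1]
          show (f s).2.1 = (f (s+1)).2.1 + (dvec i).2.1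
          rw [heq, (add_comp _ _).2.1]
        · rw [(add_comp _ _).2.2, hdz]
          show (0:ℤ) = (0:ℤ) + 0
          norm_num
      · rw [hω']
        show ω (layerSwap ((x.2.2.toNat : ℤ)) (g (s+1), i)) = true
        rw [hswap (s+1) hz_s1]
        exact hopen
  -- conclusion: membership in `CmEvent k m (Sm0 m)` for the swapped configuration
  have hrtg : g t ∈ cluster k ω' (g 0) :=
    reflTransGen_iff_exists_chain.mpr ⟨t, g, rfl, rfl, hgstep⟩
  have hg0 : g 0 ∈ Sm0 m := by
    refine ⟨?_, ?_, ?_, ?_, rfl⟩ <;> rw [hg] <;> simp only [h0]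
    · exact hx.1
    · exact hx.2.1
    · exact hx.2.2.1
    · exact hx.2.2.2.1
  -- distance lower bound for all of Sm0
  have hge : ∀ a ∈ Sm0 m, (m:ℤ) ≤ supDist (g t) a := by
    intro a ha
    have haSm : a ∈ Sm k m := by
      refine ⟨ha.1, ha.2.1, ha.2.2.1, ha.2.2.2.1, ?_, ?_⟩
      · simp [ha.2.2.2.2]
      · rw [ha.2.2.2.2]; exact_mod_cast Nat.zero_le k
    have hd := htspec a haSm
    have hzt : (f t).2.2 = x.2.2 := hzconst t le_rfl
    have hza : a.2.2 = 0 := ha.2.2.2.2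
    have habs : |(f t).2.2 - a.2.2| < (m:ℤ) := by
      rw [hzt, hza, sub_zero, abs_of_nonneg hxz0]
      omega
    have hsup_ft : supDist (f t) a
        = max |(f t).1 - a.1| (max |(f t).2.1 - a.2.1| |(f t).2.2 - a.2.2|) := rfl
    have hsup_gt : supDist (g t) a
        = max |(f t).1 - a.1| (max |(f t).2.1 - a.2.1| |(0:ℤ) - a.2.2|) := rfl
    rw [hsup_gt]
    rw [hsup_ft] at hd
    rcases le_max_iff.mp hd with h | h
    · exact le_max_of_le_left h
    · rcases le_max_iff.mp h with h' | h'
      · exact le_max_of_le_right (le_max_of_le_left h')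
      · exact absurd h' (not_le.mpr habs)
  -- the step from `t-1` to `t` moves each horizontal coordinate by at most 1
  have hstep_abs : |(f t).1 - (f (t-1)).1| ≤ 1 ∧ |(f t).2.1 - (f (t-1)).2.1| ≤ 1 := by
    obtain ⟨i, hi2, hcase⟩ := hzstep (t-1) (by omega)
    obtain ⟨-, hd1, hd2⟩ := dvec_comp hi2
    have ht1 : t - 1 + 1 = t := by omega
    rw [ht1] at hcase
    rcases hcase with ⟨heq, -, -⟩ | ⟨heq, -, -⟩
    · constructor
      · rw [heq, (add_comp _ _).1, add_sub_cancel_left]; exact hd1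
      · rw [heq, (add_comp _ _).2.1, add_sub_cancel_left]; exact hd2
    · constructor
      · rw [heq, (add_comp _ _).1, sub_add_eq_sub_sub, sub_self, zero_sub, abs_neg]
        exact hd1
      · rw [heq, (add_comp _ _).2.1, sub_add_eq_sub_sub, sub_self, zero_sub, abs_neg]
        exact hd2
  obtain ⟨a0, ha0, hda0⟩ := hnear (t-1) (by omega)
  obtain ⟨hc1, hc2, hc3, hc4, -⟩ := ha0
  have ha'mem : ((a0.1, a0.2.1, (0:ℤ)) : Vtx) ∈ Sm0 m := ⟨hc1, hc2, hc3, hc4, rfl⟩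
  have hA0 : |(f (t-1)).1 - a0.1| < (m:ℤ) := lt_of_le_of_lt (le_max_left _ _) hda0
  have hB0 : |(f (t-1)).2.1 - a0.2.1| < (m:ℤ) :=
    lt_of_le_of_lt ((le_max_left _ _).trans (le_max_right _ _)) hda0
  have hA : |(f t).1 - a0.1| ≤ (m:ℤ) := by
    have h1 := abs_sub_le (f t).1 (f (t-1)).1 a0.1
    linarith [hstep_abs.1]
  have hB : |(f t).2.1 - a0.2.1| ≤ (m:ℤ) := by
    have h1 := abs_sub_le (f t).2.1 (f (t-1)).2.1 a0.2.1
    linarith [hstep_abs.2]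
  have hle : supDist (g t) ((a0.1, a0.2.1, (0:ℤ)) : Vtx) ≤ (m:ℤ) := by
    show max |(f t).1 - a0.1| (max |(f t).2.1 - a0.2.1| |(0:ℤ) - 0|) ≤ (m:ℤ)
    refine max_le hA (max_le hB ?_)
    simp
  exact ⟨g 0, hg0, g t, hrtg, hge, ((a0.1, a0.2.1, (0:ℤ)) : Vtx), ha'mem,
    le_antisymm hle (hge _ ha'mem)⟩

/-- `P_{p,q}(C_m(S_m) ∩ Q(S_m)) ≤ (k+1) P_{p,q}(C_m(S_m⁰))`. -/
theorem Cm_inter_Q_le (k m : ℕ) (hm : k < m) (p q : ℝ)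
    (hp : p ∈ Set.Icc (0 : ℝ) 1) (hq : q ∈ Set.Icc (0 : ℝ) 1) :
    slabMeasure k p q (CmEvent k m (Sm k m) ∩ Qevent k m) ≤
      ((k : ℝ≥0∞) + 1) * slabMeasure k p q (CmEvent k m (Sm0 m)) := by
  have hC0 : MeasurableSet (CmEvent k m (Sm0 m)) := measurableSet_CmEvent k m _
  have hT : ∀ j : ℤ, Measurable (fun ω : Config => fun e => ω (layerSwap j e)) :=
    fun j => measurable_pi_lambda _ (fun e => measurable_pi_apply _)
  have hsub : CmEvent k m (Sm k m) ∩ Qevent k m ⊆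
      ⋃ j : Fin (k+1),
        (fun ω : Config => fun e => ω (layerSwap (((j : ℕ)) : ℤ) e)) ⁻¹'
          CmEvent k m (Sm0 m) := by
    rintro ω ⟨hC, hQ⟩
    obtain ⟨j, hj, hmem⟩ := exists_layer_crossing k m hm ω hC hQ
    exact Set.mem_iUnion.mpr ⟨⟨j, by omega⟩, hmem⟩
  refine le_trans (measure_mono hsub) (le_trans (measure_iUnion_le _) ?_)
  have heach : ∀ j : Fin (k+1),
      slabMeasure k p q
        ((fun ω : Config => fun e => ω (layerSwap (((j : ℕ)) : ℤ) e)) ⁻¹'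
          CmEvent k m (Sm0 m))
        = slabMeasure k p q (CmEvent k m (Sm0 m)) := by
    intro j
    rw [← Measure.map_apply (hT _) hC0, slabMeasure_map_layerSwap]
  have hsum : (∑' j : Fin (k+1), slabMeasure k p q
      ((fun ω : Config => fun e => ω (layerSwap (((j : ℕ)) : ℤ) e)) ⁻¹'
        CmEvent k m (Sm0 m)))
      = ((k+1 : ℕ) : ℝ≥0∞) * slabMeasure k p q (CmEvent k m (Sm0 m)) := by
    calc (∑' j : Fin (k+1), slabMeasure k p q
        ((fun ω : Config => fun e => ω (layerSwap (((j : ℕ)) : ℤ) e)) ⁻¹'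
          CmEvent k m (Sm0 m)))
        = ∑' _ : Fin (k+1), slabMeasure k p q (CmEvent k m (Sm0 m)) := tsum_congr heach
      _ = ∑ _ : Fin (k+1), slabMeasure k p q (CmEvent k m (Sm0 m)) := tsum_fintype _
      _ = (Finset.univ : Finset (Fin (k+1))).card • slabMeasure k p q (CmEvent k m (Sm0 m)) :=
          Finset.sum_const _
      _ = (k+1) • slabMeasure k p q (CmEvent k m (Sm0 m)) := by
          rw [Finset.card_univ, Fintype.card_fin]
      _ = ((k+1 : ℕ) : ℝ≥0∞) * slabMeasure k p q (CmEvent k m (Sm0 m)) := by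
          rw [nsmul_eq_mul]
  rw [hsum]
  have hcast : ((k+1 : ℕ) : ℝ≥0∞) = (k : ℝ≥0∞) + 1 := by push_cast; ring
  rw [hcast]

end AnisoSlab
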